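/- arXiv:1909.02281 — 3 statements merged into one kernel-verified Lean document; each statement's English description precedes it below -/
import Mathlib

section
/- Let X be a Banach lattice and let S = (S(t))_{t≥0} be a convex C₀-semigroup on X. Then for every T > 0 and every x₀ ∈ X there exist constants L ≥ 0 and r > 0 such that sup_{t∈[0,T]} ‖S(t)y − S(t)z‖ ≤ L‖y − z‖ for all y, z ∈ X with ‖y − x₀‖ ≤ r and ‖z − x₀‖ ≤ r. -/
/-!
A convex operator bounded on a ball is Lipschitz on the concentric ball of half the radius:
convexity along a segment bounds the increment from above, and since the norm is solid, upper
bounds for `a` and `-a` control `‖a‖`. It therefore suffices to bound `S t` uniformly for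
`t ∈ [0, T]` on a ball around `x₀`. The sets of `x` with `‖S t x‖ ≤ n` for all `t ≤ 1 / (n + 1)`
are closed (each `S t` is convex and bounded, hence continuous) and cover `X` by strong
continuity, so by Baire one of them contains a ball. Convexity moves this bound to a ball around
`x₀` (bounds from above by reflecting through the centre of that ball, from below by reflecting
through `x₀`), and the semigroup law extends it from `[0, δ]` to `[0, T]`.
-/

open Filter Topology Set Metric

theorem norm_le_add_of_le_of_neg_le {X : Type*} [NormedAddCommGroup X] [Lattice X]
    [HasSolidNorm X] [IsOrderedAddMonoid X] {a u v : X} (hu : a ≤ u) (hv : -a ≤ v) :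
    ‖a‖ ≤ ‖u‖ + ‖v‖ := by
  have habs : |a| ≤ |u| + |v| := abs_le'.2
    ⟨hu.trans ((le_abs_self u).trans (le_add_of_nonneg_right (abs_nonneg v))),
     hv.trans ((le_abs_self v).trans (le_add_of_nonneg_left (abs_nonneg u)))⟩
  calc ‖a‖ ≤ ‖|u| + |v|‖ :=
        norm_le_norm_of_abs_le_abs <| by
          rwa [abs_of_nonneg (add_nonneg (abs_nonneg u) (abs_nonneg v))]
    _ ≤ ‖|u|‖ + ‖|v|‖ := norm_add_le _ _
    _ = ‖u‖ + ‖v‖ := by rw [norm_abs_eq_norm, norm_abs_eq_norm]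

theorem ConvexOn.sub_le_smul_sub {E X : Type*} [AddCommGroup E] [Module ℝ E] [AddCommGroup X]
    [PartialOrder X] [IsOrderedAddMonoid X] [Module ℝ X] {F : E → X} (hF : ConvexOn ℝ univ F)
    (y h : E) {a : ℝ} (ha₀ : 0 ≤ a) (ha₁ : a ≤ 1) :
    F (y + a • h) - F y ≤ a • (F (y + h) - F y) := by
  have hconv := hF.2 (mem_univ (y + h)) (mem_univ y) ha₀ (sub_nonneg.2 ha₁) (by ring)
  rw [show a • (y + h) + (1 - a) • y = y + a • h by module] at hconv
  calc F (y + a • h) - F y ≤ a • F (y + h) + (1 - a) • F y - F y := sub_le_sub_right hconv _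
    _ = a • (F (y + h) - F y) := by module

section PartialOrder

variable {E X : Type*} [NormedAddCommGroup E] [NormedSpace ℝ E]
  [NormedAddCommGroup X] [PartialOrder X] [NormedSpace ℝ X] {F : E → X}

theorem ConvexOn.exists_sub_le_of_norm_le [IsOrderedAddMonoid X] (hF : ConvexOn ℝ univ F)
    {c : E} {r M : ℝ} (hr : 0 < r)
    (hM : ∀ x ∈ closedBall c (2 * r), ‖F x‖ ≤ M) {y z : E} (hy : y ∈ closedBall c r)
    (hz : z ∈ closedBall c r) : ∃ u, F z - F y ≤ u ∧ ‖u‖ ≤ 2 * M / r * ‖z - y‖ := by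
  rcases eq_or_ne z y with rfl | hzy
  · exact ⟨0, by simp, by simp⟩
  set d := ‖z - y‖
  have hd : 0 < d := norm_pos_iff.2 (sub_ne_zero.2 hzy)
  -- `z` lies on the segment from `y` to `w`, and `w` is still in the ball of radius `2 r`.
  set w := z + (r / d) • (z - y) with hw_def
  have hw : w ∈ closedBall c (2 * r) := by
    rw [mem_closedBall_iff_norm] at hz ⊢
    calc ‖w - c‖ = ‖(z - c) + (r / d) • (z - y)‖ := by rw [hw_def]; abel_nf
      _ ≤ ‖z - c‖ + r := by
        grw [norm_add_le, norm_smul, Real.norm_of_nonneg (by positivity), div_mul_cancel₀ _ hd.ne']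
      _ ≤ 2 * r := by linarith
  have hyw : y + (d / (d + r)) • (w - y) = z := by
    have hcoef : d / (d + r) * (1 + r / d) = 1 := by field_simp
    rw [show w - y = (1 + r / d) • (z - y) by rw [hw_def]; module, smul_smul, hcoef, one_smul,
      add_sub_cancel]
  have hseg := hF.sub_le_smul_sub y (w - y) (a := d / (d + r)) (by positivity)
    ((div_le_one (by positivity)).2 (by linarith))
  rw [hyw, add_sub_cancel] at hseg
  refine ⟨_, hseg, ?_⟩
  have hM₀ : 0 ≤ M := (norm_nonneg _).trans (hM c (mem_closedBall_self (by positivity)))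
  have hy₂ : y ∈ closedBall c (2 * r) := closedBall_subset_closedBall (by linarith) hy
  calc ‖(d / (d + r)) • (F w - F y)‖ ≤ d / r * (M + M) := by
        rw [norm_smul, Real.norm_of_nonneg (by positivity)]
        gcongr
        · linarith
        · exact (norm_sub_le _ _).trans (add_le_add (hM w hw) (hM y hy₂))
    _ = 2 * M / r * d := by ring

theorem ConvexOn.exists_le_of_norm_le (hF : ConvexOn ℝ univ F) {x₁ : E} {ε M : ℝ}
    (hM : ∀ x ∈ closedBall x₁ ε, ‖F x‖ ≤ M) (x₀ : E) {y : E} (hy : y ∈ closedBall x₀ (ε / 2)) :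
    ∃ u, F y ≤ u ∧ ‖u‖ ≤ (M + ‖F (2 • x₀ - x₁)‖) / 2 := by
  have hw : x₁ + 2 • (y - x₀) ∈ closedBall x₁ ε := by
    rw [mem_closedBall_iff_norm] at hy ⊢
    rw [add_sub_cancel_left, two_smul]
    linarith [norm_add_le (y - x₀) (y - x₀)]
  have hmid := hF.2 (mem_univ (x₁ + 2 • (y - x₀))) (mem_univ (2 • x₀ - x₁))
    (by norm_num : (0 : ℝ) ≤ 1 / 2) (by norm_num : (0 : ℝ) ≤ 1 / 2) (by norm_num)
  rw [show (1 / 2 : ℝ) • (x₁ + 2 • (y - x₀)) + (1 / 2 : ℝ) • (2 • x₀ - x₁) = y by module] at hmid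
  refine ⟨_, hmid, ?_⟩
  grw [norm_add_le, norm_smul, norm_smul, Real.norm_of_nonneg (by norm_num), hM _ hw]
  linarith

end PartialOrder

section Lattice

variable {E X : Type*} [NormedAddCommGroup E] [NormedSpace ℝ E]
  [NormedAddCommGroup X] [Lattice X] [HasSolidNorm X] [IsOrderedAddMonoid X] [NormedSpace ℝ X]
  {F : E → X}

theorem ConvexOn.norm_sub_le_of_norm_le (hF : ConvexOn ℝ univ F) {c : E} {r M : ℝ} (hr : 0 < r)
    (hM : ∀ x ∈ closedBall c (2 * r), ‖F x‖ ≤ M) {y z : E} (hy : y ∈ closedBall c r)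
    (hz : z ∈ closedBall c r) : ‖F y - F z‖ ≤ 4 * M / r * ‖y - z‖ := by
  obtain ⟨u, hu, hu'⟩ := hF.exists_sub_le_of_norm_le hr hM hz hy
  obtain ⟨v, hv, hv'⟩ := hF.exists_sub_le_of_norm_le hr hM hy hz
  calc ‖F y - F z‖ ≤ ‖u‖ + ‖v‖ := norm_le_add_of_le_of_neg_le hu (by rwa [neg_sub])
    _ ≤ 2 * M / r * ‖y - z‖ + 2 * M / r * ‖y - z‖ := by rw [norm_sub_rev z] at hv'; linarith
    _ = 4 * M / r * ‖y - z‖ := by ring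

theorem ConvexOn.continuous_of_bounded (hF : ConvexOn ℝ univ F)
    (hb : ∀ r : ℝ, 0 < r → ∃ M : ℝ, ∀ x : E, ‖x‖ ≤ r → ‖F x‖ ≤ M) : Continuous F := by
  refine continuous_iff_continuousAt.2 fun c ↦ ?_
  obtain ⟨M, hM⟩ := hb (‖c‖ + 2) (by positivity)
  have hM' : ∀ x ∈ closedBall c (2 * 1), ‖F x‖ ≤ M := fun x hx ↦ hM x <| by
    rw [mem_closedBall_iff_norm] at hx
    linarith [norm_le_norm_sub_add x c]
  refine continuousAt_of_locally_lipschitz one_pos (4 * M / 1) fun y hy ↦ ?_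
  rw [dist_eq_norm, dist_eq_norm]
  exact hF.norm_sub_le_of_norm_le one_pos hM' (mem_closedBall.2 hy.le)
    (mem_closedBall_self zero_le_one)

theorem ConvexOn.norm_le_of_exists_le (hF : ConvexOn ℝ univ F) {x₀ : E} {ρ K : ℝ}
    (hup : ∀ y ∈ closedBall x₀ ρ, ∃ u, F y ≤ u ∧ ‖u‖ ≤ K) {y : E} (hy : y ∈ closedBall x₀ ρ) :
    ‖F y‖ ≤ 2 * K + 2 * ‖F x₀‖ := by
  have hy' : 2 • x₀ - y ∈ closedBall x₀ ρ := by
    rw [mem_closedBall_iff_norm] at hy ⊢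
    rwa [show 2 • x₀ - y - x₀ = -(y - x₀) by module, norm_neg]
  obtain ⟨u, hu, hu'⟩ := hup y hy
  obtain ⟨v, hv, hv'⟩ := hup _ hy'
  -- `x₀` is the midpoint of `y` and its reflection `2 x₀ - y`, which bounds `F y` from below.
  have hmid := hF.2 (mem_univ y) (mem_univ (2 • x₀ - y))
    (by norm_num : (0 : ℝ) ≤ 1 / 2) (by norm_num : (0 : ℝ) ≤ 1 / 2) (by norm_num)
  rw [show (1 / 2 : ℝ) • y + (1 / 2 : ℝ) • (2 • x₀ - y) = x₀ by module] at hmid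
  have hlow : 2 • F x₀ ≤ v + F y :=
    calc 2 • F x₀ = F x₀ + F x₀ := two_nsmul _
      _ ≤ ((1 / 2 : ℝ) • F y + (1 / 2 : ℝ) • F (2 • x₀ - y)) +
          ((1 / 2 : ℝ) • F y + (1 / 2 : ℝ) • F (2 • x₀ - y)) := add_le_add hmid hmid
      _ = F (2 • x₀ - y) + F y := by module
      _ ≤ v + F y := add_le_add hv le_rfl
  calc ‖F y‖ ≤ ‖u‖ + ‖v - 2 • F x₀‖ := norm_le_add_of_le_of_neg_le hu (neg_le_sub_iff_le_add.2 hlow)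
    _ ≤ K + (K + 2 * ‖F x₀‖) := by grw [norm_sub_le, norm_nsmul_le, hu', hv']; norm_num
    _ = 2 * K + 2 * ‖F x₀‖ := by ring

end Lattice

theorem exists_norm_le_Icc_of_tendsto_nhdsGT {E : Type*} [SeminormedAddCommGroup E] {f : ℝ → E}
    {x : E} (hf : Tendsto f (𝓝[>] 0) (𝓝 x)) : ∃ δ > 0, ∃ C, ∀ t ∈ Icc 0 δ, ‖f t‖ ≤ C := by
  have hev : ∀ᶠ t in 𝓝[>] 0, ‖f t‖ < ‖x‖ + 1 := hf.norm.eventually (gt_mem_nhds (lt_add_one _))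
  obtain ⟨δ, hδ, hsub⟩ := mem_nhdsGT_iff_exists_Ioc_subset.1 hev
  refine ⟨δ, hδ, max ‖f 0‖ (‖x‖ + 1), fun t ht ↦ ?_⟩
  rcases ht.1.eq_or_lt with rfl | ht₀
  · exact le_max_left _ _
  · exact (hsub ⟨ht₀, ht.2⟩).le.trans (le_max_right _ _)

theorem exists_closedBall_forall_Icc_norm_le {X E : Type*} [PseudoMetricSpace X] [CompleteSpace X]
    [Nonempty X] [SeminormedAddCommGroup E] {g : ℝ → X → E} (hcont : ∀ t, 0 ≤ t → Continuous (g t))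
    (horbit : ∀ x, ∃ δ > 0, ∃ C, ∀ t ∈ Icc 0 δ, ‖g t x‖ ≤ C) :
    ∃ x₁, ∃ ε > 0, ∃ δ > 0, ∃ M, ∀ t ∈ Icc 0 δ, ∀ x ∈ closedBall x₁ ε, ‖g t x‖ ≤ M := by
  set P : ℕ → Set X := fun n ↦ ⋂ t ∈ Icc (0 : ℝ) ((n : ℝ) + 1)⁻¹, {x | ‖g t x‖ ≤ n}
  have hclosed : ∀ n, IsClosed (P n) := fun n ↦
    isClosed_biInter fun t ht ↦ isClosed_le (hcont t ht.1).norm continuous_const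
  have hcover : ⋃ n, P n = univ := eq_univ_of_forall fun x ↦ by
    obtain ⟨δ, hδ, C, hC⟩ := horbit x
    obtain ⟨n, hn⟩ := exists_nat_ge (max C δ⁻¹)
    have hnδ : ((n : ℝ) + 1)⁻¹ ≤ δ :=
      inv_le_of_inv_le₀ hδ ((le_max_right _ _).trans (hn.trans (lt_add_one _).le))
    exact mem_iUnion.2 ⟨n, mem_iInter₂.2 fun t ht ↦
      (hC t ⟨ht.1, ht.2.trans hnδ⟩).trans ((le_max_left _ _).trans hn)⟩
  obtain ⟨N, x₁, hx₁⟩ := nonempty_interior_of_iUnion_of_closed hclosed hcover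
  obtain ⟨ε, hε, hball⟩ := isOpen_iff.1 isOpen_interior x₁ hx₁
  refine ⟨x₁, ε / 2, by positivity, ((N : ℝ) + 1)⁻¹, by positivity, N, fun t ht x hx ↦ ?_⟩
  exact mem_iInter₂.1 (interior_subset (hball (closedBall_subset_ball (by linarith) hx))) t ht

theorem exists_norm_le_Icc_of_semigroup {E : Type*} [SeminormedAddCommGroup E] (S : ℝ → E → E)
    (hsg : ∀ s t : ℝ, 0 ≤ s → 0 ≤ t → ∀ x : E, S (t + s) x = S t (S s x)) {δ : ℝ} (hδ : 0 < δ)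
    (hbdd : ∀ r : ℝ, 0 < r → ∃ M : ℝ, ∀ x : E, ‖x‖ ≤ r → ‖S δ x‖ ≤ M) {A : Set E} {C : ℝ}
    (hC : ∀ t ∈ Icc 0 δ, ∀ y ∈ A, ‖S t y‖ ≤ C) (T : ℝ) :
    ∃ M, ∀ t ∈ Icc 0 T, ∀ y ∈ A, ‖S t y‖ ≤ M := by
  have hbound : ∀ n : ℕ, ∃ M, ∀ t ∈ Icc 0 ((n + 1) * δ), ∀ y ∈ A, ‖S t y‖ ≤ M := by
    intro n
    induction n with
    | zero => exact ⟨C, by simpa using hC⟩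
    | succ n ih =>
      obtain ⟨M, hM⟩ := ih
      obtain ⟨M', hM'⟩ := hbdd (max M 1) (by positivity)
      refine ⟨max C M', fun t ht y hy ↦ ?_⟩
      rcases le_total t δ with htδ | hδt
      · exact (hC t ⟨ht.1, htδ⟩ y hy).trans (le_max_left _ _)
      · have hrest : t - δ ∈ Icc 0 ((n + 1) * δ) :=
          ⟨by linarith, by push_cast at ht; linarith [ht.2]⟩
        rw [show t = δ + (t - δ) by ring, hsg _ _ hrest.1 hδ.le]
        exact (hM' _ ((hM _ hrest y hy).trans (le_max_left _ _))).trans (le_max_right _ _)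
  obtain ⟨n, hn⟩ := exists_nat_ge (T / δ)
  obtain ⟨M, hM⟩ := hbound n
  refine ⟨M, fun t ht ↦ hM t ⟨ht.1, ht.2.trans ?_⟩⟩
  rw [div_le_iff₀ hδ] at hn
  linarith

theorem exists_closedBall_forall_Icc_norm_le_of_convexOn {E X : Type*} [NormedAddCommGroup E]
    [NormedSpace ℝ E] [CompleteSpace E] [NormedAddCommGroup X] [Lattice X] [HasSolidNorm X]
    [IsOrderedAddMonoid X] [NormedSpace ℝ X] {g : ℝ → E → X}
    (hconv : ∀ t, 0 ≤ t → ConvexOn ℝ univ (g t)) (hcont : ∀ t, 0 ≤ t → Continuous (g t))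
    (horbit : ∀ x, ∃ δ > 0, ∃ C, ∀ t ∈ Icc 0 δ, ‖g t x‖ ≤ C) (x₀ : E) :
    ∃ ρ > 0, ∃ δ > 0, ∃ M, ∀ t ∈ Icc 0 δ, ∀ y ∈ closedBall x₀ ρ, ‖g t y‖ ≤ M := by
  obtain ⟨x₁, ε, hε, δ₁, hδ₁, M, hM⟩ := exists_closedBall_forall_Icc_norm_le hcont horbit
  obtain ⟨δ₂, hδ₂, C₂, hC₂⟩ := horbit x₀
  obtain ⟨δ₃, hδ₃, C₃, hC₃⟩ := horbit (2 • x₀ - x₁)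
  refine ⟨ε / 2, by positivity, min δ₁ (min δ₂ δ₃), by positivity, M + C₃ + 2 * C₂,
    fun t ht y hy ↦ ?_⟩
  have ht₁ : t ∈ Icc 0 δ₁ := ⟨ht.1, ht.2.trans (min_le_left _ _)⟩
  have ht₂ : t ∈ Icc 0 δ₂ := ⟨ht.1, ht.2.trans ((min_le_right _ _).trans (min_le_left _ _))⟩
  have ht₃ : t ∈ Icc 0 δ₃ := ⟨ht.1, ht.2.trans ((min_le_right _ _).trans (min_le_right _ _))⟩
  have hup := fun y' (hy' : y' ∈ closedBall x₀ (ε / 2)) ↦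
    (hconv t ht.1).exists_le_of_norm_le (hM t ht₁) x₀ hy'
  calc ‖g t y‖ ≤ 2 * ((M + ‖g t (2 • x₀ - x₁)‖) / 2) + 2 * ‖g t x₀‖ :=
        (hconv t ht.1).norm_le_of_exists_le hup hy
    _ ≤ M + C₃ + 2 * C₂ := by linarith [hC₂ t ht₂, hC₃ t ht₃]

theorem convex_semigroup_local_lipschitz_general
    {X : Type*} [NormedAddCommGroup X] [Lattice X] [HasSolidNorm X]
    [IsOrderedAddMonoid X] [NormedSpace ℝ X] [CompleteSpace X]
    (S : ℝ → X → X)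
    (hconv : ∀ t : ℝ, 0 ≤ t → ∀ x y : X, ∀ a : ℝ, 0 ≤ a → a ≤ 1 →
      S t (a • x + (1 - a) • y) ≤ a • S t x + (1 - a) • S t y)
    (hbdd : ∀ t : ℝ, 0 ≤ t → ∀ r : ℝ, 0 < r → ∃ M : ℝ, ∀ x : X, ‖x‖ ≤ r → ‖S t x‖ ≤ M)
    (hsg : ∀ s t : ℝ, 0 ≤ s → 0 ≤ t → ∀ x : X, S (t + s) x = S t (S s x))
    (hc0 : ∀ x : X, Tendsto (fun t : ℝ => S t x) (𝓝[>] (0 : ℝ)) (𝓝 x))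
    (T : ℝ) (x₀ : X) :
    ∃ L : ℝ, 0 ≤ L ∧ ∃ r : ℝ, 0 < r ∧
      ∀ y z : X, ‖y - x₀‖ ≤ r → ‖z - x₀‖ ≤ r →
        ∀ t : ℝ, t ∈ Icc (0 : ℝ) T → ‖S t y - S t z‖ ≤ L * ‖y - z‖ := by
  have hconvOn : ∀ t, 0 ≤ t → ConvexOn ℝ univ (S t) := fun t ht ↦
    ⟨convex_univ, fun x _ y _ a b ha hb hab ↦ by
      obtain rfl : b = 1 - a := by linarith
      exact hconv t ht x y a ha (by linarith)⟩
  have hcont : ∀ t, 0 ≤ t → Continuous (S t) := fun t ht ↦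
    (hconvOn t ht).continuous_of_bounded (hbdd t ht)
  obtain ⟨ρ, hρ, δ, hδ, C, hC⟩ := exists_closedBall_forall_Icc_norm_le_of_convexOn hconvOn hcont
    (fun x ↦ exists_norm_le_Icc_of_tendsto_nhdsGT (hc0 x)) x₀
  obtain ⟨M, hM⟩ := exists_norm_le_Icc_of_semigroup S hsg hδ (hbdd δ hδ.le) hC T
  -- `M` may be negative when `[0, T]` is empty.
  refine ⟨4 * max M 0 / (ρ / 2), by positivity, ρ / 2, by positivity, fun y z hy hz t ht ↦ ?_⟩
  refine (hconvOn t ht.1).norm_sub_le_of_norm_le (half_pos hρ) (fun x hx ↦ ?_)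
    (mem_closedBall_iff_norm.2 hy) (mem_closedBall_iff_norm.2 hz)
  rw [mul_div_cancel₀ ρ two_ne_zero] at hx
  exact (hM t ht x hx).trans (le_max_left _ _)

/-- A convex C₀-semigroup on a Banach lattice is locally Lipschitz in the
space variable, uniformly in `t ∈ [0,T]`. -/
theorem convex_semigroup_local_lipschitz
    {X : Type*} [NormedAddCommGroup X] [Lattice X] [HasSolidNorm X]
    [IsOrderedAddMonoid X] [NormedSpace ℝ X] [CompleteSpace X]
    [PosSMulStrictMono ℝ X] [PosSMulReflectLT ℝ X]
    (S : ℝ → X → X)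
    (hconv : ∀ t : ℝ, 0 ≤ t → ∀ x y : X, ∀ a : ℝ, 0 ≤ a → a ≤ 1 →
      S t (a • x + (1 - a) • y) ≤ a • S t x + (1 - a) • S t y)
    (hbdd : ∀ t : ℝ, 0 ≤ t → ∀ r : ℝ, 0 < r → ∃ M : ℝ, ∀ x : X, ‖x‖ ≤ r → ‖S t x‖ ≤ M)
    (hid : ∀ x : X, S 0 x = x)
    (hsg : ∀ s t : ℝ, 0 ≤ s → 0 ≤ t → ∀ x : X, S (t + s) x = S t (S s x))
    (hc0 : ∀ x : X, Tendsto (fun t : ℝ => S t x) (𝓝[>] (0 : ℝ)) (𝓝 x))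
    (T : ℝ) (hT : 0 < T) (x₀ : X) :
    ∃ L : ℝ, 0 ≤ L ∧ ∃ r : ℝ, 0 < r ∧
      ∀ y z : X, ‖y - x₀‖ ≤ r → ‖z - x₀‖ ≤ r →
        ∀ t : ℝ, t ∈ Icc (0 : ℝ) T → ‖S t y - S t z‖ ≤ L * ‖y - z‖ :=
  convex_semigroup_local_lipschitz_general S hconv hbdd hsg hc0 T x₀
end

section
/- Let X be a Banach lattice and let S = (S(t))_{t≥0} be a convex C₀-semigroup on X. Then for every x ∈ X the map [0,∞) → X, t ↦ S(t)x, is continuous. -/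
/-!
A convex map that is bounded near a point is Lipschitz at that point (in a Banach lattice the
two one-sided convexity estimates combine into a norm estimate), so every `S t` is continuous and
orbits are right continuous by the semigroup law. For left continuity one needs the `S s` with
`s` small to be equi-Lipschitz at `x`. Baire's theorem turns the pointwise bounds
`‖S s w‖ ≤ ‖w‖ + 1` for small `s` into a uniform bound on some ball around some `z`; reflecting
through `x` and `z`, convexity moves this bound to a ball around `x`, which gives the
equi-Lipschitz estimate. Then `S u x - S s x = S s (S (u - s) x) - S s x → 0` as `s ↑ u` for
small `u`, and the semigroup law spreads continuity from `[0, δ]` to `[0, ∞)`.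
-/

open Filter Topology Set Metric

theorem norm_le_norm_add_norm_of_le_of_le {F : Type*} [NormedAddCommGroup F] [Lattice F]
    [HasSolidNorm F] [IsOrderedAddMonoid F] {a b c : F} (hab : a ≤ b) (hbc : b ≤ c) :
    ‖b‖ ≤ ‖a‖ + ‖c‖ :=
  calc ‖b‖ ≤ ‖|c| ⊔ |a|‖ := by
        refine norm_le_norm_of_abs_le_abs ?_
        rw [abs_of_nonneg (le_sup_of_le_left (abs_nonneg c))]
        exact sup_le_sup (hbc.trans (le_abs_self c)) ((neg_le_neg hab).trans (neg_le_abs a))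
    _ ≤ ‖|c|‖ + ‖|a|‖ := norm_sup_le_add _ _
    _ = ‖a‖ + ‖c‖ := by rw [norm_abs_eq_norm, norm_abs_eq_norm, add_comm]

namespace ConvexOn

section OrderedModule

variable {E F : Type*} [AddCommGroup E] [Module ℝ E] [AddCommGroup F] [PartialOrder F]
  [Module ℝ F] {T : E → F}

theorem two_smul_apply_le_add [PosSMulMono ℝ F] (hT : ConvexOn ℝ univ T) (x y : E) :
    (2 : ℝ) • T ((2 : ℝ)⁻¹ • (x + y)) ≤ T x + T y := by
  have h2 : (0 : ℝ) ≤ 2⁻¹ := by norm_num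
  have h := hT.2 (mem_univ x) (mem_univ y) h2 h2 (by norm_num)
  rw [← smul_add, ← smul_add] at h
  calc (2 : ℝ) • T ((2 : ℝ)⁻¹ • (x + y)) ≤ (2 : ℝ) • (2 : ℝ)⁻¹ • (T x + T y) :=
        smul_le_smul_of_nonneg_left h (by norm_num)
    _ = T x + T y := by module

theorem apply_add_smul_sub_le [IsOrderedAddMonoid F] (hT : ConvexOn ℝ univ T) (c v : E)
    {a : ℝ} (ha₀ : 0 ≤ a) (ha₁ : a ≤ 1) : T (c + a • v) - T c ≤ a • (T (c + v) - T c) := by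
  have h := hT.2 (mem_univ (c + v)) (mem_univ c) ha₀ (sub_nonneg.2 ha₁) (add_sub_cancel a 1)
  calc T (c + a • v) - T c = T (a • (c + v) + (1 - a) • c) - T c := by congr 2; module
    _ ≤ a • T (c + v) + (1 - a) • T c - T c := sub_le_sub_right h _
    _ = a • (T (c + v) - T c) := by module

/-- The lower bound comes from convexity at the midpoint `c` of `c + a • v` and `c - a • v`. -/
theorem neg_smul_sub_le_apply_add_smul_sub [IsOrderedAddMonoid F] [PosSMulMono ℝ F]
    (hT : ConvexOn ℝ univ T) (c v : E) {a : ℝ} (ha₀ : 0 ≤ a) (ha₁ : a ≤ 1) :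
    -(a • (T (c - v) - T c)) ≤ T (c + a • v) - T c := by
  have hmid := hT.two_smul_apply_le_add (c + a • v) (c - a • v)
  have hrefl := hT.apply_add_smul_sub_le c (-v) ha₀ ha₁
  rw [show (2 : ℝ)⁻¹ • (c + a • v + (c - a • v)) = c by module] at hmid
  rw [← sub_eq_add_neg, smul_neg, ← sub_eq_add_neg] at hrefl
  rw [← sub_nonneg] at hmid hrefl ⊢
  convert add_nonneg hmid hrefl using 1
  module

end OrderedModule

section BanachLattice

variable {E F : Type*} [NormedAddCommGroup E] [NormedSpace ℝ E]
  [NormedAddCommGroup F] [Lattice F] [HasSolidNorm F] [IsOrderedAddMonoid F] [NormedSpace ℝ F]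
  [PosSMulMono ℝ F] {T : E → F}

theorem norm_apply_add_smul_sub_le (hT : ConvexOn ℝ univ T) (c v : E) {a : ℝ} (ha₀ : 0 ≤ a)
    (ha₁ : a ≤ 1) :
    ‖T (c + a • v) - T c‖ ≤ a * (‖T (c - v) - T c‖ + ‖T (c + v) - T c‖) := by
  calc ‖T (c + a • v) - T c‖ ≤ ‖-(a • (T (c - v) - T c))‖ + ‖a • (T (c + v) - T c)‖ :=
        norm_le_norm_add_norm_of_le_of_le (hT.neg_smul_sub_le_apply_add_smul_sub c v ha₀ ha₁)
          (hT.apply_add_smul_sub_le c v ha₀ ha₁)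
    _ = a * (‖T (c - v) - T c‖ + ‖T (c + v) - T c‖) := by
        rw [norm_neg, norm_smul, norm_smul, Real.norm_of_nonneg ha₀, mul_add]

theorem dist_le_of_norm_le (hT : ConvexOn ℝ univ T) {c : E} {r M : ℝ} (hr : 0 < r)
    (hM : ∀ w ∈ closedBall c r, ‖T w‖ ≤ M) {y : E} (hy : y ∈ closedBall c r) :
    dist (T y) (T c) ≤ 4 * M / r * dist y c := by
  rcases eq_or_ne y c with rfl | hyc
  · simp
  rw [mem_closedBall, dist_eq_norm] at hy
  rw [dist_eq_norm, dist_eq_norm]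
  set d := ‖y - c‖
  have hd : 0 < d := norm_pos_iff.2 (sub_ne_zero.2 hyc)
  set v := (r / d) • (y - c)
  have hv : ‖v‖ = r := by
    rw [norm_smul, Real.norm_of_nonneg (by positivity), div_mul_cancel₀ _ hd.ne']
  have hy_eq : y = c + (d / r) • v := by
    rw [smul_smul, div_mul_div_comm, mul_comm d, div_self (by positivity), one_smul]
    abel
  have hdiff : ∀ w ∈ closedBall c r, ‖T w - T c‖ ≤ 2 * M := fun w hw =>
    (norm_sub_le _ _).trans (by linarith [hM w hw, hM c (mem_closedBall_self hr.le)])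
  calc ‖T y - T c‖ ≤ d / r * (‖T (c - v) - T c‖ + ‖T (c + v) - T c‖) := by
        rw [hy_eq]
        exact hT.norm_apply_add_smul_sub_le c v (by positivity) ((div_le_one hr).2 hy)
    _ ≤ d / r * (2 * M + 2 * M) := by
        gcongr
        · exact hdiff _ (by simp [hv])
        · exact hdiff _ (by simp [hv])
    _ = 4 * M / r * d := by ring

theorem continuous_of_bounded_s3 (hT : ConvexOn ℝ univ T)
    (hbdd : ∀ r : ℝ, 0 < r → ∃ M : ℝ, ∀ x : E, ‖x‖ ≤ r → ‖T x‖ ≤ M) : Continuous T := by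
  refine continuous_iff_continuousAt.2 fun c => ?_
  obtain ⟨M, hM⟩ := hbdd (‖c‖ + 1) (by positivity)
  have hM' : ∀ w ∈ closedBall c 1, ‖T w‖ ≤ M := fun w hw =>
    hM w ((norm_le_norm_add_norm_sub' w c).trans (by simpa [dist_eq_norm, add_comm] using hw))
  exact continuousAt_of_locally_lipschitz one_pos (4 * M / 1) fun y hy =>
    hT.dist_le_of_norm_le one_pos hM' hy.le

/-- Reflecting through the centres of the balls turns a bound near `z` into a bound near `x`:
`w` is the midpoint of a point near `z` and `x + (x - z)`, while a point near `z` is the midpoint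
of `w` and `z + (z - x)`. -/
theorem norm_apply_le_of_norm_le_on_ball (hT : ConvexOn ℝ univ T) {z x : E} {ρ M : ℝ}
    (hM : ∀ w ∈ ball z ρ, ‖T w‖ ≤ M) {w : E} (hw : w ∈ ball x (ρ / 2)) :
    ‖T w‖ ≤ 3 * M + ‖T (x + (x - z))‖ + ‖T (z + (z - x))‖ := by
  set p := x + (x - z)
  set q := z + (z - x)
  rw [mem_ball, dist_eq_norm] at hw
  have hM₀ : 0 ≤ M :=
    (norm_nonneg _).trans (hM z (mem_ball_self (by linarith [norm_nonneg (w - x)])))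
  have hv : w + (w - p) ∈ ball z ρ := by
    rw [mem_ball, dist_eq_norm, show w + (w - p) - z = (2 : ℝ) • (w - x) by module, norm_smul]
    norm_num
    linarith
  have hm : (2 : ℝ)⁻¹ • (w + q) ∈ ball z ρ := by
    rw [mem_ball, dist_eq_norm, show (2 : ℝ)⁻¹ • (w + q) - z = (2 : ℝ)⁻¹ • (w - x) by module,
      norm_smul]
    norm_num
    linarith [norm_nonneg (w - x)]
  have hupper := hT.two_smul_apply_le_add (w + (w - p)) p
  rw [show (2 : ℝ)⁻¹ • (w + (w - p) + p) = w by module] at hupper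
  have hlower : (2 : ℝ) • ((2 : ℝ) • T ((2 : ℝ)⁻¹ • (w + q)) - T q) ≤ (2 : ℝ) • T w :=
    smul_le_smul_of_nonneg_left (sub_le_iff_le_add.2 (hT.two_smul_apply_le_add w q)) (by norm_num)
  have h := norm_le_norm_add_norm_of_le_of_le hlower hupper
  have hsub := norm_sub_le ((2 : ℝ) • T ((2 : ℝ)⁻¹ • (w + q))) (T q)
  simp only [norm_smul, Real.norm_ofNat] at h hsub
  linarith [norm_add_le (T (w + (w - p))) (T p), hM _ hv, hM _ hm, norm_nonneg (T p),
    norm_nonneg (T q)]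

end BanachLattice

end ConvexOn

theorem exists_ball_eventually_norm_le {ι X F : Type*} [PseudoMetricSpace X] [BaireSpace X]
    [Nonempty X] [SeminormedAddCommGroup F] {l : Filter ι} [l.IsCountablyGenerated]
    {f : ι → X → F} (hf : ∀ᶠ i in l, Continuous (f i))
    (hb : ∀ x, ∃ C, ∀ᶠ i in l, ‖f i x‖ ≤ C) :
    ∃ z, ∃ ρ > 0, ∃ C, ∀ᶠ i in l, ∀ w ∈ ball z ρ, ‖f i w‖ ≤ C := by
  obtain ⟨s, hs⟩ := l.exists_antitone_basis
  set K : ℕ → Set X := fun n => ⋂ i ∈ s n ∩ {i | Continuous (f i)}, {w | ‖f i w‖ ≤ n}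
  have hK_closed : ∀ n, IsClosed (K n) := fun n =>
    isClosed_biInter fun i hi => isClosed_le (continuous_norm.comp hi.2) continuous_const
  have hK_cover : ⋃ n, K n = univ := by
    refine eq_univ_of_forall fun x => ?_
    obtain ⟨C, hC⟩ := hb x
    obtain ⟨n, -, hn⟩ := hs.toHasBasis.eventually_iff.1 hC
    refine mem_iUnion.2 ⟨max n ⌈C⌉₊, mem_iInter₂.2 fun i hi => ?_⟩
    calc ‖f i x‖ ≤ C := hn (hs.antitone (le_max_left _ _) hi.1)
      _ ≤ ⌈C⌉₊ := Nat.le_ceil C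
      _ ≤ (max n ⌈C⌉₊ : ℕ) := by exact_mod_cast le_max_right _ _
  obtain ⟨n, z, hz⟩ := nonempty_interior_of_iUnion_of_closed hK_closed hK_cover
  obtain ⟨ρ, hρ, hball⟩ := Metric.mem_nhds_iff.1 (mem_interior_iff_mem_nhds.1 hz)
  refine ⟨z, ρ, hρ, n, ?_⟩
  filter_upwards [hs.toHasBasis.mem_of_mem trivial, hf] with i hi hic w hw
  exact mem_iInter₂.1 (hball hw) i ⟨hi, hic⟩

structure IsConvexC0Semigroup {X : Type*} [NormedAddCommGroup X] [PartialOrder X]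
    [NormedSpace ℝ X] (S : ℝ → X → X) : Prop where
  convexOn : ∀ t, 0 ≤ t → ConvexOn ℝ univ (S t)
  bounded : ∀ t, 0 ≤ t → ∀ r, 0 < r → ∃ M, ∀ x : X, ‖x‖ ≤ r → ‖S t x‖ ≤ M
  zero : ∀ x, S 0 x = x
  add : ∀ s t, 0 ≤ s → 0 ≤ t → ∀ x, S (t + s) x = S t (S s x)
  tendsto_zero : ∀ x, Tendsto (fun t => S t x) (𝓝[>] 0) (𝓝 x)

namespace IsConvexC0Semigroup

variable {X : Type*} [NormedAddCommGroup X] [Lattice X] [NormedSpace ℝ X] {S : ℝ → X → X}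

theorem tendsto_nhdsGE_zero (hS : IsConvexC0Semigroup S) (x : X) :
    Tendsto (fun t => S t x) (𝓝[≥] 0) (𝓝 x) := by
  have h : ContinuousWithinAt (fun t => S t x) (Ioi 0) 0 := by
    simpa only [ContinuousWithinAt, hS.zero] using hS.tendsto_zero x
  simpa only [ContinuousWithinAt, hS.zero] using continuousWithinAt_Ioi_iff_Ici.1 h

theorem eventually_norm_le (hS : IsConvexC0Semigroup S) (x : X) :
    ∀ᶠ t in 𝓝[≥] 0, ‖S t x‖ ≤ ‖x‖ + 1 :=
  (hS.tendsto_nhdsGE_zero x).norm.eventually_le_const (lt_add_one _)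

theorem continuousWithinAt_Icc (hS : IsConvexC0Semigroup S) {x : X} {r L u : ℝ} (hr : 0 < r)
    (hL : ∀ t ∈ Icc 0 u, ∀ y ∈ closedBall x r, dist (S t y) (S t x) ≤ L * dist y x) :
    ContinuousWithinAt (fun t => S t x) (Icc 0 u) u := by
  have hback : Tendsto (fun t => S (u - t) x) (𝓝[Icc 0 u] u) (𝓝 x) := by
    refine (hS.tendsto_nhdsGE_zero x).comp (tendsto_nhdsWithin_iff.2 ⟨?_, ?_⟩)
    · simpa using ((continuous_sub_left u).tendsto u).mono_left nhdsWithin_le_nhds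
    · filter_upwards [self_mem_nhdsWithin] with t ht using sub_nonneg.2 ht.2
  refine tendsto_iff_dist_tendsto_zero.2 (squeeze_zero' (Eventually.of_forall fun _ => dist_nonneg)
    ?_ (by simpa using (tendsto_iff_dist_tendsto_zero.1 hback).const_mul L))
  filter_upwards [self_mem_nhdsWithin, hback (closedBall_mem_nhds x hr)] with t ht hy
  calc dist (S t x) (S u x) = dist (S t x) (S t (S (u - t) x)) := by
        rw [← hS.add _ _ (sub_nonneg.2 ht.2) ht.1, add_sub_cancel]
    _ ≤ L * dist (S (u - t) x) x := by rw [dist_comm]; exact hL t ht _ hy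

variable [HasSolidNorm X] [IsOrderedAddMonoid X] [PosSMulMono ℝ X]

theorem continuous (hS : IsConvexC0Semigroup S) {t : ℝ} (ht : 0 ≤ t) : Continuous (S t) :=
  (hS.convexOn t ht).continuous_of_bounded_s3 (hS.bounded t ht)

theorem continuousWithinAt_Ici (hS : IsConvexC0Semigroup S) {u : ℝ} (hu : 0 ≤ u) (x : X) :
    ContinuousWithinAt (fun t => S t x) (Ici u) u := by
  have hshift : Tendsto (fun t => t - u) (𝓝[≥] u) (𝓝[≥] 0) := by
    refine tendsto_nhdsWithin_iff.2 ⟨?_, ?_⟩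
    · simpa using ((continuous_sub_right u).tendsto u).mono_left nhdsWithin_le_nhds
    · filter_upwards [self_mem_nhdsWithin] with t ht using sub_nonneg.2 (mem_Ici.1 ht)
  refine (((hS.continuous hu).tendsto x).comp ((hS.tendsto_nhdsGE_zero x).comp hshift)).congr' ?_
  filter_upwards [self_mem_nhdsWithin] with t ht
  simpa using (hS.add (t - u) u (sub_nonneg.2 ht) hu x).symm

variable [CompleteSpace X]

theorem exists_ball_eventually_norm_le (hS : IsConvexC0Semigroup S) :
    ∃ z, ∃ ρ > 0, ∃ C, ∀ᶠ t in 𝓝[≥] 0, ∀ w ∈ ball z ρ, ‖S t w‖ ≤ C :=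
  _root_.exists_ball_eventually_norm_le
    (eventually_mem_nhdsWithin.mono fun _ ht => hS.continuous ht)
    fun x => ⟨_, hS.eventually_norm_le x⟩

theorem eventually_norm_le_on_ball (hS : IsConvexC0Semigroup S) (x : X) :
    ∃ ρ > 0, ∃ C, ∀ᶠ t in 𝓝[≥] 0, ∀ w ∈ ball x ρ, ‖S t w‖ ≤ C := by
  obtain ⟨z, ρ, hρ, C, hC⟩ := hS.exists_ball_eventually_norm_le
  refine ⟨ρ / 2, half_pos hρ, 3 * C + (‖x + (x - z)‖ + 1) + (‖z + (z - x)‖ + 1), ?_⟩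
  filter_upwards [hC, hS.eventually_norm_le (x + (x - z)), hS.eventually_norm_le (z + (z - x)),
    self_mem_nhdsWithin] with t hCt hp hq ht w hw
  linarith [(hS.convexOn t ht).norm_apply_le_of_norm_le_on_ball hCt hw]

theorem exists_eventually_dist_le (hS : IsConvexC0Semigroup S) (x : X) :
    ∃ r > 0, ∃ L, ∀ᶠ t in 𝓝[≥] 0, ∀ y ∈ closedBall x r, dist (S t y) (S t x) ≤ L * dist y x := by
  obtain ⟨ρ, hρ, C, hC⟩ := hS.eventually_norm_le_on_ball x
  refine ⟨ρ / 2, half_pos hρ, 4 * C / (ρ / 2), ?_⟩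
  filter_upwards [hC, self_mem_nhdsWithin] with t hCt ht y hy
  exact (hS.convexOn t ht).dist_le_of_norm_le (half_pos hρ)
    (fun w hw => hCt w (closedBall_subset_ball (half_lt_self hρ) hw)) hy

theorem exists_continuousOn_Icc (hS : IsConvexC0Semigroup S) (x : X) :
    ∃ δ > 0, ContinuousOn (fun t => S t x) (Icc 0 δ) := by
  obtain ⟨r, hr, L, hL⟩ := hS.exists_eventually_dist_le x
  obtain ⟨δ, hδ, hsub⟩ := mem_nhdsGE_iff_exists_Icc_subset.1 hL
  refine ⟨δ, hδ, fun u hu => ?_⟩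
  have hleft := hS.continuousWithinAt_Icc hr fun t ht => hsub ⟨ht.1, ht.2.trans hu.2⟩
  exact (hleft.union (hS.continuousWithinAt_Ici hu.1 x)).mono fun t ht =>
    (le_total t u).imp (fun h => ⟨ht.1, h⟩) id

/-- Continuity on `[0, δ]` propagates to `[0, ∞)` through `S t x = S c (S (t - c) x)`, with `t - c`
kept in the interior of `[0, δ]`. -/
theorem continuousOn_Ici (hS : IsConvexC0Semigroup S) (x : X) :
    ContinuousOn (fun t => S t x) (Ici 0) := by
  obtain ⟨δ, hδ, hcont⟩ := hS.exists_continuousOn_Icc x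
  intro t₀ ht₀
  rcases lt_or_ge t₀ δ with hlt | hge
  · exact (hcont t₀ ⟨ht₀, hlt.le⟩).mono_of_mem_nhdsWithin
      (mem_of_superset (inter_mem_nhdsWithin _ (Iio_mem_nhds hlt)) fun t ht => ⟨ht.1, ht.2.le⟩)
  set c := t₀ - δ / 2 with hc_def
  have hc : 0 ≤ c := by linarith
  have hmid : ContinuousAt (fun t => S (t - c) x) t₀ :=
    (hcont.continuousAt (Icc_mem_nhds (half_pos hδ) (half_lt_self hδ))).comp_of_eq
      (continuous_sub_right c).continuousAt (by ring)
  refine (((hS.continuous hc).continuousAt.comp hmid).congr ?_).continuousWithinAt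
  filter_upwards [Ioi_mem_nhds (show c < t₀ by linarith)] with t ht
  simpa using (hS.add (t - c) c (sub_nonneg.2 (le_of_lt ht)) hc x).symm

end IsConvexC0Semigroup

/-- For a convex C₀-semigroup `S` on a Banach lattice `X`, the orbit map
`t ↦ S(t)x` is continuous on `[0,∞)` for every `x ∈ X`. -/
theorem convex_semigroup_orbit_continuous
    {X : Type*} [NormedAddCommGroup X] [Lattice X] [HasSolidNorm X] [IsOrderedAddMonoid X]
    [NormedSpace ℝ X] [CompleteSpace X]
    [PosSMulStrictMono ℝ X]
    (S : ℝ → X → X)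
    (hconv : ∀ t : ℝ, 0 ≤ t → ∀ x y : X, ∀ a : ℝ, 0 ≤ a → a ≤ 1 →
      S t (a • x + (1 - a) • y) ≤ a • S t x + (1 - a) • S t y)
    (hbdd : ∀ t : ℝ, 0 ≤ t → ∀ r : ℝ, 0 < r → ∃ M : ℝ, ∀ x : X, ‖x‖ ≤ r → ‖S t x‖ ≤ M)
    (hid : ∀ x : X, S 0 x = x)
    (hsg : ∀ s t : ℝ, 0 ≤ s → 0 ≤ t → ∀ x : X, S (t + s) x = S t (S s x))
    (hc0 : ∀ x : X, Tendsto (fun t : ℝ => S t x) (𝓝[>] (0 : ℝ)) (𝓝 x))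
    (x : X) :
    ContinuousOn (fun t : ℝ => S t x) (Ici (0 : ℝ)) := by
  have hconvexOn : ∀ t, 0 ≤ t → ConvexOn ℝ univ (S t) := fun t ht =>
    ⟨convex_univ, fun u _ v _ a b ha hb hab => by
      obtain rfl : b = 1 - a := by linarith
      exact hconv t ht u v a ha (by linarith)⟩
  exact IsConvexC0Semigroup.continuousOn_Ici ⟨hconvexOn, hbdd, hid, hsg, hc0⟩ x
end

section
/- Let X be a Banach lattice with order continuous norm, S a convex C₀-semigroup on X with generator A. Then for every x ∈ D(A) and every t ≥ 0, one has S(t)x ∈ D(A) and A S(t)x = S'₊(t,x)(Ax), i.e., lim_{h↓0} (S(h)S(t)x − S(t)x)/h exists in norm and equals lim_{h↓0} (S(t)(x + hAx) − S(t)x)/h. -/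
/-! For `x ∈ D(A)` write `S(h)x = x + h • Y h` with `Y h → Ax`; by the semigroup law
`S(h)S(t)x = S(t)(x + h • Y h)`. Convexity of `S(t)` makes the slopes
`h ↦ (S(t)(x + h • y) - S(t)x) / h` monotone on `(0, ∞)` and bounded below, so σ-Dedekind
completeness and σ-order continuity of the norm turn their order limit into a norm limit
`S'₊(t,x)y`. A bounded convex operator is Lipschitz on balls, so replacing the direction `Y h` by
`Ax` changes the slope by `O(‖Y h - Ax‖)`. Hence `(S(h)S(t)x - S(t)x) / h → S'₊(t,x)(Ax)`. -/

open Filter Topology Set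

variable {X : Type*} [NormedAddCommGroup X] [Lattice X] [IsOrderedAddMonoid X] [HasSolidNorm X] [NormedSpace ℝ X] [CompleteSpace X]

/-- Domain of the generator of a semigroup `S`: the set of `x` for which the difference
quotients `(S(h)x − x)/h` converge in norm as `h ↓ 0`. -/
def genDom (S : ℝ → X → X) : Set X :=
  {x : X | ∃ z : X, Tendsto (fun h : ℝ => h⁻¹ • (S h x - x)) (𝓝[>] (0 : ℝ)) (𝓝 z)}

section ConvexSlope

variable {E F : Type*} [AddCommGroup E] [Module ℝ E] [AddCommGroup F] [PartialOrder F]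
  [IsOrderedAddMonoid F] [Module ℝ F] {T : E → F}

noncomputable def dirSlope (T : E → F) (x y : E) (h : ℝ) : F := h⁻¹ • (T (x + h • y) - T x)

lemma ConvexOn.sub_le_smul_sub_s8 (hT : ConvexOn ℝ univ T) {a : ℝ} (ha₀ : 0 ≤ a) (ha₁ : a ≤ 1)
    (u v : E) : T (a • u + (1 - a) • v) - T v ≤ a • (T u - T v) := by
  have h := hT.2 (mem_univ u) (mem_univ v) ha₀ (sub_nonneg.2 ha₁) (add_sub_cancel a 1)
  calc T (a • u + (1 - a) • v) - T v ≤ a • T u + (1 - a) • T v - T v := sub_le_sub_right h _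
    _ = a • (T u - T v) := by module

variable [PosSMulMono ℝ F]

lemma ConvexOn.monotoneOn_dirSlope (hT : ConvexOn ℝ univ T) (x y : E) :
    MonotoneOn (dirSlope T x y) (Ioi 0) := by
  intro h₁ (h₁_pos : 0 < h₁) h₂ (h₂_pos : 0 < h₂) h₁₂
  have h := hT.sub_le_smul_sub_s8 (div_nonneg h₁_pos.le h₂_pos.le)
    ((div_le_one h₂_pos).2 h₁₂) (x + h₂ • y) x
  have hx : (h₁ / h₂) • (x + h₂ • y) + (1 - h₁ / h₂) • x = x + h₁ • y := by
    match_scalars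
    · field_simp; ring
    · field_simp
  rw [hx] at h
  calc dirSlope T x y h₁ ≤ h₁⁻¹ • (h₁ / h₂) • (T (x + h₂ • y) - T x) :=
        smul_le_smul_of_nonneg_left h (inv_nonneg.2 h₁_pos.le)
    _ = dirSlope T x y h₂ := by
        rw [smul_smul, inv_mul_eq_div, div_div_cancel_left' h₁_pos.ne', dirSlope]

lemma ConvexOn.sub_le_dirSlope (hT : ConvexOn ℝ univ T) (x y : E) {h : ℝ} (hh : 0 < h) :
    T x - T (x - y) ≤ dirSlope T x y h := by
  have h₁ : 0 < 1 + h := by linarith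
  have hk := hT.sub_le_smul_sub_s8 (div_nonneg hh.le h₁.le)
    ((div_le_one h₁).2 (by linarith)) (x - y) (x + h • y)
  have hx : (h / (1 + h)) • (x - y) + (1 - h / (1 + h)) • (x + h • y) = x := by
    match_scalars <;> field_simp <;> ring
  rw [hx] at hk
  have key : 0 ≤ (T (x + h • y) - T x) - h • (T x - T (x - y)) := by
    have e : (T (x + h • y) - T x) - h • (T x - T (x - y))
        = (1 + h) • ((h / (1 + h)) • (T (x - y) - T (x + h • y)) - (T x - T (x + h • y))) := by
      match_scalars <;> field_simp <;> ring
    rw [e]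
    exact smul_nonneg h₁.le (sub_nonneg.2 hk)
  rw [dirSlope, le_inv_smul_iff_of_pos hh]
  exact sub_nonneg.1 key

end ConvexSlope

section OrderContinuous

variable {F : Type*} [NormedAddCommGroup F] [Lattice F] [IsOrderedAddMonoid F]

lemma exists_tendsto_of_antitone_of_bddBelow
    (hDed : ∀ f : ℕ → F, BddAbove (range f) → ∃ s : F, IsLUB (range f) s)
    (hoc : ∀ f : ℕ → F, Antitone f → IsGLB (range f) 0 →
      Tendsto (fun n => ‖f n‖) atTop (𝓝 (0 : ℝ)))
    {f : ℕ → F} (hf : Antitone f) (hb : BddBelow (range f)) :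
    ∃ z, IsGLB (range f) z ∧ Tendsto f atTop (𝓝 z) := by
  obtain ⟨s, hs⟩ := hDed _ hb.range_neg
  have hz : IsGLB (range f) (-s) := by
    have h := hs.neg
    rwa [← image_neg_eq_neg, ← range_comp, Function.comp_def, funext fun n => neg_neg (f n)] at h
  have hz₀ : IsGLB (range fun n => f n - -s) 0 := by
    have h := (OrderIso.addRight s).isGLB_image'.2 hz
    simpa only [← range_comp, Function.comp_def, OrderIso.addRight_apply, neg_add_cancel,
      sub_neg_eq_add] using h
  exact ⟨-s, hz, tendsto_iff_norm_sub_tendsto_zero.2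
    (hoc _ (fun m n hmn => sub_le_sub_right (hf hmn) _) hz₀)⟩

lemma exists_tendsto_nhdsGT_of_monotoneOn_of_bddBelow [HasSolidNorm F]
    (hDed : ∀ f : ℕ → F, BddAbove (range f) → ∃ s : F, IsLUB (range f) s)
    (hoc : ∀ f : ℕ → F, Antitone f → IsGLB (range f) 0 →
      Tendsto (fun n => ‖f n‖) atTop (𝓝 (0 : ℝ)))
    {q : ℝ → F} (hq : MonotoneOn q (Ioi 0)) (hb : BddBelow (q '' Ioi 0)) :
    ∃ z, Tendsto q (𝓝[>] 0) (𝓝 z) := by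
  have hpos : ∀ n : ℕ, (0 : ℝ) < (n + 1 : ℝ)⁻¹ := fun n => by positivity
  have hanti : Antitone fun n : ℕ => q (n + 1 : ℝ)⁻¹ := fun m n hmn =>
    hq (hpos n) (hpos m) (inv_anti₀ (by positivity) (by gcongr))
  obtain ⟨z, hz, hlim⟩ := exists_tendsto_of_antitone_of_bddBelow hDed hoc hanti
    (hb.mono (range_subset_iff.2 fun n => mem_image_of_mem q (hpos n)))
  have hzq : ∀ h : ℝ, 0 < h → z ≤ q h := by
    intro h hh
    obtain ⟨n, hn⟩ := exists_nat_one_div_lt hh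
    rw [one_div] at hn
    exact (hz.1 (mem_range_self n)).trans (hq (hpos n) hh hn.le)
  refine ⟨z, Metric.tendsto_nhds.2 fun ε hε => ?_⟩
  obtain ⟨N, hN⟩ := (Metric.tendsto_atTop.1 hlim) ε hε
  filter_upwards [Ioo_mem_nhdsGT (hpos N)] with h ⟨hh, hhN⟩
  have habs : |q h - z| ≤ |q (N + 1 : ℝ)⁻¹ - z| := by
    rw [abs_of_nonneg (sub_nonneg.2 (hzq h hh)),
      abs_of_nonneg (sub_nonneg.2 (hz.1 (mem_range_self N)))]
    exact sub_le_sub_right (hq hh (hpos N) hhN.le) z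
  rw [dist_eq_norm]
  exact (norm_le_norm_of_abs_le_abs habs).trans_lt (by simpa [dist_eq_norm] using hN N le_rfl)

end OrderContinuous

lemma ConvexOn.exists_tendsto_dirSlope {E F : Type*} [AddCommGroup E] [Module ℝ E]
    [NormedAddCommGroup F] [Lattice F] [IsOrderedAddMonoid F] [HasSolidNorm F] [NormedSpace ℝ F]
    [PosSMulMono ℝ F]
    (hDed : ∀ f : ℕ → F, BddAbove (range f) → ∃ s : F, IsLUB (range f) s)
    (hoc : ∀ f : ℕ → F, Antitone f → IsGLB (range f) 0 →
      Tendsto (fun n => ‖f n‖) atTop (𝓝 (0 : ℝ)))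
    {T : E → F} (hT : ConvexOn ℝ univ T) (x y : E) :
    ∃ z, Tendsto (dirSlope T x y) (𝓝[>] 0) (𝓝 z) :=
  exists_tendsto_nhdsGT_of_monotoneOn_of_bddBelow hDed hoc (hT.monotoneOn_dirSlope x y)
    ⟨T x - T (x - y), forall_mem_image.2 fun _ hh => hT.sub_le_dirSlope x y hh⟩

section ConvexLipschitz

variable {E F : Type*} [NormedAddCommGroup E] [NormedSpace ℝ E] [NormedAddCommGroup F] [Lattice F]
  [IsOrderedAddMonoid F] [HasSolidNorm F] [NormedSpace ℝ F] [PosSMulMono ℝ F] {T : E → F} {r M : ℝ}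

/-- `u` lies on the segment from `v` to the point `w` at distance `r` beyond `u` on the same ray,
and `d / (d + r) ≤ d / r` for `d = ‖u - v‖`. -/
lemma ConvexOn.exists_sub_le_smul (hT : ConvexOn ℝ univ T) (hr : 0 < r)
    (hM : ∀ u, ‖u‖ ≤ 2 * r → ‖T u‖ ≤ M) {u v : E} (hu : ‖u‖ ≤ r) (hv : ‖v‖ ≤ r) :
    ∃ p, 0 ≤ p ∧ ‖p‖ ≤ 2 * M ∧ T u - T v ≤ (‖u - v‖ / r) • p := by
  set d := ‖u - v‖
  set w := u + (r / d) • (u - v)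
  have hw : ‖w‖ ≤ 2 * r := calc
    ‖w‖ ≤ ‖u‖ + r / d * d := by
      rw [← Real.norm_of_nonneg (by positivity : 0 ≤ r / d), ← norm_smul]; exact norm_add_le _ _
    _ ≤ r + r := add_le_add hu (by by_cases hd : d = 0 <;> simp [hd, hr.le])
    _ = 2 * r := by ring
  refine ⟨|T w| + |T v|, by positivity, ?_, ?_⟩
  · calc ‖|T w| + |T v|‖ ≤ ‖T w‖ + ‖T v‖ := by
          rw [← norm_abs_eq_norm (T w), ← norm_abs_eq_norm (T v)]; exact norm_add_le _ _
      _ ≤ M + M := add_le_add (hM w hw) (hM v (by linarith))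
      _ = 2 * M := by ring
  rcases eq_or_ne u v with rfl | huv
  · simp [d]
  have hd : 0 < d := norm_pos_iff.2 (sub_ne_zero.2 huv)
  have h := hT.sub_le_smul_sub_s8 (div_nonneg hd.le (by positivity : 0 ≤ d + r))
    ((div_le_one (by positivity)).2 (by linarith)) w v
  have hu_eq : (d / (d + r)) • w + (1 - d / (d + r)) • v = u := by
    match_scalars
    · field_simp
    · field_simp; ring
  rw [hu_eq] at h
  have hwv : T w - T v ≤ |T w| + |T v| := by
    simpa only [sub_neg_eq_add] using sub_le_sub (le_abs_self (T w)) (neg_le.mpr (neg_le_abs (T v)))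
  calc T u - T v ≤ (d / (d + r)) • (T w - T v) := h
    _ ≤ (d / (d + r)) • (|T w| + |T v|) := smul_le_smul_of_nonneg_left hwv (by positivity)
    _ ≤ (d / r) • (|T w| + |T v|) :=
        smul_le_smul_of_nonneg_right (div_le_div_of_nonneg_left hd.le hr (by linarith))
          (by positivity)

lemma ConvexOn.lipschitzOnWith_closedBall (hT : ConvexOn ℝ univ T) (hr : 0 < r)
    (hM : ∀ u, ‖u‖ ≤ 2 * r → ‖T u‖ ≤ M) :
    LipschitzOnWith (4 * M / r).toNNReal T (Metric.closedBall 0 r) := by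
  refine LipschitzOnWith.of_dist_le' fun u hu v hv => ?_
  rw [mem_closedBall_zero_iff] at hu hv
  obtain ⟨p, hp₀, hpM, hp⟩ := hT.exists_sub_le_smul hr hM hu hv
  obtain ⟨q, hq₀, hqM, hq⟩ := hT.exists_sub_le_smul hr hM hv hu
  rw [norm_sub_rev v u, ← neg_sub] at hq
  have hc : 0 ≤ ‖u - v‖ / r := by positivity
  have habs : |T u - T v| ≤ |(‖u - v‖ / r) • (p + q)| := by
    rw [abs_of_nonneg (smul_nonneg hc (add_nonneg hp₀ hq₀))]
    exact abs_le'.2 ⟨hp.trans (smul_le_smul_of_nonneg_left (le_add_of_nonneg_right hq₀) hc),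
      hq.trans (smul_le_smul_of_nonneg_left (le_add_of_nonneg_left hp₀) hc)⟩
  rw [dist_eq_norm, dist_eq_norm]
  calc ‖T u - T v‖ ≤ ‖(‖u - v‖ / r) • (p + q)‖ := norm_le_norm_of_abs_le_abs habs
    _ ≤ ‖u - v‖ / r * (2 * M + 2 * M) := by
        rw [norm_smul, Real.norm_of_nonneg hc]
        exact mul_le_mul_of_nonneg_left ((norm_add_le _ _).trans (add_le_add hpM hqM)) hc
    _ = 4 * M / r * ‖u - v‖ := by ring

end ConvexLipschitz

lemma LipschitzOnWith.tendsto_dirSlope_sub_dirSlope {E F : Type*} [SeminormedAddCommGroup E]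
    [NormedSpace ℝ E] [SeminormedAddCommGroup F] [NormedSpace ℝ F]
    {T : E → F} {K : NNReal} {s : Set E} {x y : E} {Y : ℝ → E}
    (hT : LipschitzOnWith K T s) (hs : s ∈ 𝓝 x) (hY : Tendsto Y (𝓝[>] 0) (𝓝 y)) :
    Tendsto (fun h => dirSlope T x (Y h) h - dirSlope T x y h) (𝓝[>] 0) (𝓝 0) := by
  have hmem {Z : ℝ → E} {z : E} (hZ : Tendsto Z (𝓝[>] 0) (𝓝 z)) :
      ∀ᶠ h in 𝓝[>] 0, x + h • Z h ∈ s := by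
    have h := tendsto_const_nhds (x := x) |>.add
      (tendsto_nhdsWithin_of_tendsto_nhds tendsto_id |>.smul hZ)
    rw [zero_smul, add_zero] at h
    exact h hs
  refine squeeze_zero_norm' ?_
    (by simpa using (tendsto_iff_norm_sub_tendsto_zero.1 hY).const_mul (K : ℝ))
  filter_upwards [hmem hY, hmem tendsto_const_nhds, self_mem_nhdsWithin] with h h₁ h₂ (hh : 0 < h)
  calc ‖dirSlope T x (Y h) h - dirSlope T x y h‖
        = h⁻¹ * ‖T (x + h • Y h) - T (x + h • y)‖ := by
        rw [dirSlope, dirSlope, ← smul_sub, sub_sub_sub_cancel_right, norm_smul, norm_inv,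
          Real.norm_of_nonneg hh.le]
    _ ≤ h⁻¹ * (K * ‖(x + h • Y h) - (x + h • y)‖) := by gcongr; exact hT.norm_sub_le h₁ h₂
    _ = K * ‖Y h - y‖ := by
        rw [add_sub_add_left_eq_sub, ← smul_sub, norm_smul, Real.norm_of_nonneg hh.le]
        field_simp

theorem generator_domain_invariant_general
    [PosSMulStrictMono ℝ X]
    (hDed : ∀ f : ℕ → X, BddAbove (Set.range f) → ∃ s : X, IsLUB (Set.range f) s)
    (hoc : ∀ f : ℕ → X, Antitone f → IsGLB (Set.range f) 0 →
      Tendsto (fun n => ‖f n‖) atTop (𝓝 (0 : ℝ)))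
    (S : ℝ → X → X)
    (hconv : ∀ t : ℝ, 0 ≤ t → ∀ x y : X, ∀ a : ℝ, 0 ≤ a → a ≤ 1 →
      S t (a • x + (1 - a) • y) ≤ a • S t x + (1 - a) • S t y)
    (hbdd : ∀ t : ℝ, 0 ≤ t → ∀ r : ℝ, 0 < r → ∃ M : ℝ, ∀ x : X, ‖x‖ ≤ r → ‖S t x‖ ≤ M)
    (hsg : ∀ s t : ℝ, 0 ≤ s → 0 ≤ t → ∀ x : X, S (t + s) x = S t (S s x))
    (A : X → X)
    (hA : ∀ x ∈ genDom S, Tendsto (fun h : ℝ => h⁻¹ • (S h x - x)) (𝓝[>] (0 : ℝ)) (𝓝 (A x)))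
    (x : X) (hx : x ∈ genDom S) (t : ℝ) (ht : 0 ≤ t) :
    S t x ∈ genDom S ∧
    Tendsto (fun h : ℝ => h⁻¹ • (S t (x + h • A x) - S t x)) (𝓝[>] (0 : ℝ))
      (𝓝 (A (S t x))) := by
  have hT : ConvexOn ℝ univ (S t) := ⟨convex_univ, fun u _ v _ a b ha hb hab => by
    obtain rfl : b = 1 - a := by linarith
    exact hconv t ht u v a ha (by linarith)⟩
  obtain ⟨z, hz⟩ := hT.exists_tendsto_dirSlope hDed hoc x (A x)
  obtain ⟨M, hM⟩ := hbdd t ht (2 * (‖x‖ + 1)) (by positivity)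
  have hball : Metric.closedBall 0 (‖x‖ + 1) ∈ 𝓝 x :=
    Metric.closedBall_mem_nhds_of_mem (by simp)
  -- `S h (S t x) = S t (x + h • Y h)` with `Y h = h⁻¹ • (S h x - x)`: a slope of `S t` at `x`
  have hQ : Tendsto (fun h : ℝ => h⁻¹ • (S h (S t x) - S t x)) (𝓝[>] 0) (𝓝 z) := by
    have h := ((hT.lipschitzOnWith_closedBall (by positivity) hM).tendsto_dirSlope_sub_dirSlope
      hball (hA x hx)).add hz
    rw [zero_add] at h
    refine h.congr' ?_
    filter_upwards [self_mem_nhdsWithin] with h (hh : 0 < h)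
    rw [sub_add_cancel, dirSlope, smul_inv_smul₀ hh.ne', add_sub_cancel, ← hsg h t hh.le ht,
      ← hsg t h ht hh.le, add_comm]
  have hmem : S t x ∈ genDom S := ⟨z, hQ⟩
  exact ⟨hmem, tendsto_nhds_unique hQ (hA _ hmem) ▸ hz⟩

/-- Invariance of the domain: for a convex C₀-semigroup `S` on a Banach
lattice with order continuous norm, with generator `A`, for `x ∈ D(A)` and `t ≥ 0` one has
`S(t)x ∈ D(A)` and `A S(t)x = S'₊(t,x)(Ax)`, i.e. the difference quotients
`(S(t)(x + h·Ax) − S(t)x)/h` converge to `A(S(t)x)` as `h ↓ 0`. -/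
theorem generator_domain_invariant
    [PosSMulStrictMono ℝ X]
    (hDed : ∀ f : ℕ → X, BddAbove (Set.range f) → ∃ s : X, IsLUB (Set.range f) s)
    (hoc : ∀ f : ℕ → X, Antitone f → IsGLB (Set.range f) 0 →
      Tendsto (fun n => ‖f n‖) atTop (𝓝 (0 : ℝ)))
    (S : ℝ → X → X)
    (hconv : ∀ t : ℝ, 0 ≤ t → ∀ x y : X, ∀ a : ℝ, 0 ≤ a → a ≤ 1 →
      S t (a • x + (1 - a) • y) ≤ a • S t x + (1 - a) • S t y)
    (hbdd : ∀ t : ℝ, 0 ≤ t → ∀ r : ℝ, 0 < r → ∃ M : ℝ, ∀ x : X, ‖x‖ ≤ r → ‖S t x‖ ≤ M)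
    (hid : ∀ x : X, S 0 x = x)
    (hsg : ∀ s t : ℝ, 0 ≤ s → 0 ≤ t → ∀ x : X, S (t + s) x = S t (S s x))
    (hc0 : ∀ x : X, Tendsto (fun t : ℝ => S t x) (𝓝[>] (0 : ℝ)) (𝓝 x))
    (A : X → X)
    (hA : ∀ x ∈ genDom S, Tendsto (fun h : ℝ => h⁻¹ • (S h x - x)) (𝓝[>] (0 : ℝ)) (𝓝 (A x)))
    (x : X) (hx : x ∈ genDom S) (t : ℝ) (ht : 0 ≤ t) :
    S t x ∈ genDom S ∧
    Tendsto (fun h : ℝ => h⁻¹ • (S t (x + h • A x) - S t x)) (𝓝[>] (0 : ℝ))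
      (𝓝 (A (S t x))) :=
  generator_domain_invariant_general hDed hoc S hconv hbdd hsg A hA x hx t ht
end
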